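/- arXiv:2209.01689 — 3 statements merged into one kernel-verified Lean document; each statement's English description precedes it below -/
import Mathlib

section
/- Let X ≥ 1 and let s = σ + it be complex. Then |ζ_X(s)| ≤ ζ_X(σ), and moreover: if θ < σ < 1 then ζ_X(σ) ≤ min( κ·X^(1−σ)/(1−σ) + A/(σ−θ), κ·X^(1−σ)·log X + A/(σ−θ) ); if σ = 1 then ζ_X(1) ≤ κ·log X + A/(1−θ); and if σ > 1 then ζ_X(σ) ≤ min( σ·(A+κ)/(σ−1), κ·log X + σ·A/(σ−θ) ). -/
open scoped BigOperators Real

/-- The multiplicative norm on the Beurling generalized integers `ℕ →₀ ℕ`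
generated by the primes `q i`. -/
noncomputable def bNorm (q : ℕ → ℝ) (g : ℕ →₀ ℕ) : ℝ :=
  g.prod fun i k => q i ^ k

/-- The integer counting function `N(x)`. -/
noncomputable def bN (q : ℕ → ℝ) (x : ℝ) : ℕ :=
  {g : ℕ →₀ ℕ | bNorm q g ≤ x}.ncard

/-- The remainder `R(x) = N(x) - κ(x-1)`. -/
noncomputable def bR (q : ℕ → ℝ) (κ : ℝ) (x : ℝ) : ℝ :=
  (bN q x : ℝ) - κ * (x - 1)

/-- The Beurling zeta function, via the analytic continuation formula
`ζ(s) = κ/(s-1) + s ∫_1^∞ R(x) x^(-s-1) dx`. -/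
noncomputable def bZeta (q : ℕ → ℝ) (κ : ℝ) (s : ℂ) : ℂ :=
  (κ : ℂ) / (s - 1) + s * ∫ x in Set.Ioi (1 : ℝ), (bR q κ x : ℂ) * (x : ℂ) ^ (-s - 1)

/-- The partial sums `ζ_X(s) = ∑_{‖g‖ ≤ X} ‖g‖^{-s}`. -/
noncomputable def bZetaX (q : ℕ → ℝ) (X : ℝ) (s : ℂ) : ℂ :=
  ∑ᶠ g ∈ {g : ℕ →₀ ℕ | bNorm q g ≤ X}, (bNorm q g : ℂ) ^ (-s)

/-!
Since `|‖g‖^(-s)| = ‖g‖^(-σ)`, everything reduces to the real sum `∑_{‖g‖ ≤ X} ‖g‖^(-σ)`.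
Abel summation writes it as `N(X) X^(-σ) + σ ∫_1^X N(x) x^(-σ-1) dx`; replacing `N` by its
Axiom A majorant `F(x) = κ(x - 1) + A x^θ` and integrating by parts gives
`F(1) + ∫_1^X F'(x) x^(-σ) dx ≤ κ ∫_1^X x^(-σ) dx + σA/(σ - θ)`.
The three cases then follow from elementary bounds on `∫_1^X x^(-σ) dx`.
-/

open Set MeasureTheory Real
open scoped Finset

section IntegralsOfPowers

variable {X r : ℝ}

lemma intervalIntegrable_rpow_of_one_le (hX : 1 ≤ X) (r : ℝ) :
    IntervalIntegrable (fun x : ℝ => x ^ r) volume 1 X :=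
  intervalIntegral.intervalIntegrable_rpow (Or.inr (by
    rw [uIcc_of_le hX]; exact fun h => by linarith [h.1]))

lemma integral_one_rpow (hX : 1 ≤ X) (hr : r ≠ -1) :
    ∫ x in (1 : ℝ)..X, x ^ r = (X ^ (r + 1) - 1) / (r + 1) := by
  rw [integral_rpow (Or.inr ⟨hr, by rw [uIcc_of_le hX]; exact fun h => by linarith [h.1]⟩),
    one_rpow]

lemma integral_one_rpow_neg_one (hX : 1 ≤ X) : ∫ x in (1 : ℝ)..X, x ^ (-1 : ℝ) = log X := by
  simp_rw [rpow_neg_one]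
  rw [integral_inv_of_pos one_pos (by linarith), div_one]

lemma integral_one_rpow_le_of_neg_one_lt (hX : 1 ≤ X) (hr : -1 < r) :
    ∫ x in (1 : ℝ)..X, x ^ r ≤ X ^ (r + 1) / (r + 1) := by
  rw [integral_one_rpow hX hr.ne']
  gcongr <;> linarith

lemma integral_one_rpow_le_of_lt_neg_one (hX : 1 ≤ X) (hr : r < -1) :
    ∫ x in (1 : ℝ)..X, x ^ r ≤ 1 / (-r - 1) := by
  have hXr : 0 ≤ X ^ (r + 1) := rpow_nonneg (by linarith) _
  rw [integral_one_rpow hX hr.ne, ← neg_div_neg_eq, neg_add', neg_sub,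
    div_le_div_iff_of_pos_right (by linarith)]
  linarith

lemma integral_one_rpow_le_mul_log (hX : 1 ≤ X) (hr : -1 ≤ r) :
    ∫ x in (1 : ℝ)..X, x ^ r ≤ X ^ (r + 1) * log X := by
  rw [← integral_one_rpow_neg_one hX, ← intervalIntegral.integral_const_mul]
  refine intervalIntegral.integral_mono_on hX (intervalIntegrable_rpow_of_one_le hX r)
    ((intervalIntegrable_rpow_of_one_le hX (-1)).const_mul _) fun x hx => ?_
  have hx0 : 0 < x := by linarith [hx.1]
  calc x ^ r = x ^ (r + 1) * x ^ (-1 : ℝ) := by rw [← rpow_add hx0]; ring_nf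
    _ ≤ X ^ (r + 1) * x ^ (-1 : ℝ) := by
        gcongr
        · linarith
        · exact hx.2

lemma integral_one_rpow_le_log (hX : 1 ≤ X) (hr : r ≤ -1) :
    ∫ x in (1 : ℝ)..X, x ^ r ≤ log X := by
  rw [← integral_one_rpow_neg_one hX]
  exact intervalIntegral.integral_mono_on hX (intervalIntegrable_rpow_of_one_le hX r)
    (intervalIntegrable_rpow_of_one_le hX (-1)) fun x hx => rpow_le_rpow_of_exponent_le hx.1 hr

end IntegralsOfPowers

lemma rpow_neg_eq_add_integral {a b σ : ℝ} (ha : 0 < a) (hab : a ≤ b) (hσ : σ ≠ 0) :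
    a ^ (-σ) = b ^ (-σ) + σ * ∫ x in a..b, x ^ (-σ - 1) := by
  rw [integral_rpow (Or.inr ⟨by contrapose! hσ; linarith,
    by rw [uIcc_of_le hab]; exact fun h => by linarith [h.1]⟩), sub_add_cancel]
  field_simp
  ring

lemma sum_rpow_neg_le_of_card_le {ι : Type*} (s : Finset ι) (a : ι → ℝ) {X σ : ℝ}
    {F : ℝ → ℝ} (hX : 1 ≤ X) (hσ : 0 < σ) (ha : ∀ i ∈ s, 1 ≤ a i ∧ a i ≤ X)
    (hF : IntegrableOn (fun x => F x * x ^ (-σ - 1)) (Ioc 1 X))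
    (hcount : ∀ x ∈ Icc 1 X, (#{i ∈ s | a i ≤ x} : ℝ) ≤ F x) :
    ∑ i ∈ s, a i ^ (-σ) ≤ F X * X ^ (-σ) + σ * ∫ x in (1 : ℝ)..X, F x * x ^ (-σ - 1) := by
  set f : ℝ → ℝ := fun x => x ^ (-σ - 1)
  have hf : IntegrableOn f (Ioc 1 X) := (intervalIntegrable_rpow_of_one_le hX _).1
  have hterm : ∀ i ∈ s, a i ^ (-σ) = X ^ (-σ) + σ * ∫ x in Ioc 1 X, (Ioi (a i)).indicator f x := by
    intro i hi
    rw [rpow_neg_eq_add_integral (by linarith [ha i hi]) (ha i hi).2 hσ.ne',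
      intervalIntegral.integral_of_le (ha i hi).2, setIntegral_indicator measurableSet_Ioi,
      Ioc_inter_Ioi, max_eq_right (ha i hi).1]
  have hcard : (#s : ℝ) ≤ F X := by
    simpa [Finset.filter_true_of_mem fun i hi => (ha i hi).2] using hcount X ⟨hX, le_rfl⟩
  rw [Finset.sum_congr rfl hterm, Finset.sum_add_distrib, Finset.sum_const, nsmul_eq_mul,
    ← Finset.mul_sum, ← integral_finsetSum _ fun i _ => hf.indicator measurableSet_Ioi,
    intervalIntegral.integral_of_le hX]
  gcongr ?_ + σ * ?_
  · exact mul_le_mul_of_nonneg_right hcard (rpow_nonneg (by linarith) _)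
  refine setIntegral_mono_on (integrable_finsetSum _ fun i _ => hf.indicator measurableSet_Ioi)
    hF measurableSet_Ioc fun x hx => ?_
  have hx0 : 0 ≤ f x := rpow_nonneg (by linarith [hx.1]) _
  calc ∑ i ∈ s, (Ioi (a i)).indicator f x = #{i ∈ s | a i < x} * f x := by
        simp only [indicator_apply, mem_Ioi]
        rw [← Finset.sum_filter, Finset.sum_const, nsmul_eq_mul]
    _ ≤ #{i ∈ s | a i ≤ x} * f x := by
        gcongr
        exact le_of_lt
    _ ≤ F x * f x := by gcongr; exact hcount x (Ioc_subset_Icc_self hx)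

lemma mul_rpow_neg_add_integral_eq {F F' : ℝ → ℝ} {X σ : ℝ} (hX : 1 ≤ X)
    (hF : ∀ x ∈ Icc 1 X, HasDerivAt F (F' x) x) (hF' : IntervalIntegrable F' volume 1 X) :
    F X * X ^ (-σ) + σ * ∫ x in (1 : ℝ)..X, F x * x ^ (-σ - 1) =
      F 1 + ∫ x in (1 : ℝ)..X, F' x * x ^ (-σ) := by
  have hparts := intervalIntegral.integral_mul_deriv_eq_deriv_mul (a := 1) (b := X)
    (v := fun x => x ^ (-σ)) (v' := fun x => -σ * x ^ (-σ - 1))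
    (by rwa [uIcc_of_le hX]) (fun x hx => hasDerivAt_rpow_const (Or.inl ?_)) hF'
    ((intervalIntegrable_rpow_of_one_le hX _).const_mul _)
  · simp only [one_rpow, mul_one, mul_left_comm _ (-σ), intervalIntegral.integral_const_mul]
      at hparts
    linarith
  · rw [uIcc_of_le hX] at hx; linarith [hx.1]

section Beurling

variable {q : ℕ → ℝ}

lemma one_le_bNorm (hq : ∀ i, 1 < q i) (g : ℕ →₀ ℕ) : 1 ≤ bNorm q g :=
  Finset.one_le_prod fun i _ => one_le_pow₀ (hq i).le

lemma bZetaX_eq_sum (X : ℝ) (hfin : {g : ℕ →₀ ℕ | bNorm q g ≤ X}.Finite) (s : ℂ) :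
    bZetaX q X s = ∑ g ∈ hfin.toFinset, (bNorm q g : ℂ) ^ (-s) :=
  finsum_mem_eq_finite_toFinset_sum _ hfin

lemma re_bZetaX_ofReal (hq : ∀ i, 1 < q i) (X : ℝ)
    (hfin : {g : ℕ →₀ ℕ | bNorm q g ≤ X}.Finite) (σ : ℝ) :
    (bZetaX q X σ).re = ∑ g ∈ hfin.toFinset, bNorm q g ^ (-σ) := by
  rw [bZetaX_eq_sum X hfin, Complex.re_sum]
  refine Finset.sum_congr rfl fun g _ => ?_
  rw [← Complex.ofReal_neg, ← Complex.ofReal_cpow (by linarith [one_le_bNorm hq g]),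
    Complex.ofReal_re]

lemma norm_bZetaX_le (hq : ∀ i, 1 < q i) (X : ℝ)
    (hfin : {g : ℕ →₀ ℕ | bNorm q g ≤ X}.Finite) (s : ℂ) :
    ‖bZetaX q X s‖ ≤ (bZetaX q X s.re).re := by
  rw [re_bZetaX_ofReal hq X hfin, bZetaX_eq_sum X hfin]
  refine (norm_sum_le _ _).trans_eq (Finset.sum_congr rfl fun g _ => ?_)
  rw [Complex.norm_cpow_eq_rpow_re_of_pos (by linarith [one_le_bNorm hq g]), Complex.neg_re]

lemma card_filter_bNorm_le (hfin : ∀ x : ℝ, {g : ℕ →₀ ℕ | bNorm q g ≤ x}.Finite) {X x : ℝ}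
    (hx : x ≤ X) : #{g ∈ (hfin X).toFinset | bNorm q g ≤ x} = bN q x := by
  rw [bN, Set.ncard_eq_toFinset_card _ (hfin x)]
  congr 1
  ext g
  simp only [Finset.mem_filter, Set.Finite.mem_toFinset, Set.mem_ofPred_eq]
  exact ⟨And.right, fun h => ⟨h.trans hx, h⟩⟩

lemma sum_bNorm_rpow_neg_le (hq : ∀ i, 1 < q i)
    (hfin : ∀ x : ℝ, {g : ℕ →₀ ℕ | bNorm q g ≤ x}.Finite) {κ A θ : ℝ} (hA : 0 ≤ A)
    (hθ : 0 < θ) (hAxiomA : ∀ x : ℝ, 1 ≤ x → |bR q κ x| ≤ A * x ^ θ) {X σ : ℝ} (hX : 1 ≤ X)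
    (hσ : θ < σ) :
    ∑ g ∈ (hfin X).toFinset, bNorm q g ^ (-σ) ≤
      κ * (∫ x in (1 : ℝ)..X, x ^ (-σ)) + σ * A / (σ - θ) := by
  set F : ℝ → ℝ := fun x => κ * (x - 1) + A * x ^ θ
  have hF : ∀ x ∈ Icc 1 X, HasDerivAt F (κ * 1 + A * (θ * x ^ (θ - 1))) x := fun x hx =>
    (((hasDerivAt_id x).sub_const 1).const_mul κ).add
      ((hasDerivAt_rpow_const (Or.inl (by linarith [hx.1]))).const_mul A)
  have hF' : IntervalIntegrable (fun x => κ * 1 + A * (θ * x ^ (θ - 1))) volume 1 X :=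
    intervalIntegrable_const.add
      (((intervalIntegrable_rpow_of_one_le hX _).const_mul θ).const_mul A)
  have hFint : IntegrableOn (fun x => F x * x ^ (-σ - 1)) (Ioc 1 X) := by
    refine (ContinuousOn.integrableOn_Icc ?_).mono_set Ioc_subset_Icc_self
    exact ContinuousOn.mul (fun x hx => (hF x hx).continuousAt.continuousWithinAt)
      (continuousOn_id.rpow_const fun x hx => Or.inl (zero_lt_one.trans_le hx.1).ne')
  have habel := sum_rpow_neg_le_of_card_le _ _ hX (hθ.trans hσ)
    (fun g hg => ⟨one_le_bNorm hq g, (Set.Finite.mem_toFinset (hfin X)).1 hg⟩) hFint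
    fun x hx => by
      rw [card_filter_bNorm_le hfin hx.2]
      linarith [(abs_le.1 (hAxiomA x hx.1)).2, show bR q κ x = bN q x - κ * (x - 1) from rfl]
  have htail : ∫ x in (1 : ℝ)..X, x ^ (θ - 1 + -σ) ≤ 1 / (σ - θ) := by
    convert integral_one_rpow_le_of_lt_neg_one hX (r := θ - 1 + -σ) (by linarith) using 2
    ring
  have hsplit : ∫ x in (1 : ℝ)..X, (κ * 1 + A * (θ * x ^ (θ - 1))) * x ^ (-σ) =
      κ * (∫ x in (1 : ℝ)..X, x ^ (-σ)) + A * θ * ∫ x in (1 : ℝ)..X, x ^ (θ - 1 + -σ) := by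
    rw [← intervalIntegral.integral_const_mul, ← intervalIntegral.integral_const_mul,
      ← intervalIntegral.integral_add ((intervalIntegrable_rpow_of_one_le hX _).const_mul _)
        ((intervalIntegrable_rpow_of_one_le hX _).const_mul _)]
    refine intervalIntegral.integral_congr fun x hx => ?_
    rw [uIcc_of_le hX] at hx
    simp only [rpow_add (show 0 < x by linarith [hx.1])]
    ring
  rw [mul_rpow_neg_add_integral_eq hX hF hF', hsplit] at habel
  calc _ ≤ _ := habel
    _ ≤ F 1 + (κ * (∫ x in (1 : ℝ)..X, x ^ (-σ)) + A * θ * (1 / (σ - θ))) := by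
        gcongr
    _ = κ * (∫ x in (1 : ℝ)..X, x ^ (-σ)) + σ * A / (σ - θ) := by
        have : σ - θ ≠ 0 := sub_ne_zero.2 hσ.ne'
        simp only [F, sub_self, mul_zero, one_rpow, zero_add, mul_one]
        field_simp
        ring

end Beurling

theorem statement_3
    (q : ℕ → ℝ) (hq : ∀ i, 1 < q i)
    (hfin : ∀ x : ℝ, {g : ℕ →₀ ℕ | bNorm q g ≤ x}.Finite)
    (κ A θ : ℝ) (hκ : 0 < κ) (hA : 0 < A) (hθ0 : 0 < θ) (hθ1 : θ < 1)
    (hAxiomA : ∀ x : ℝ, 1 ≤ x → |bR q κ x| ≤ A * x ^ θ)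
    (X : ℝ) (hX : 1 ≤ X) (s : ℂ) :
    ‖bZetaX q X s‖ ≤ (bZetaX q X (s.re : ℂ)).re ∧
    (θ < s.re → s.re < 1 →
      (bZetaX q X (s.re : ℂ)).re ≤
        min (κ * X ^ (1 - s.re) / (1 - s.re) + A / (s.re - θ))
          (κ * X ^ (1 - s.re) * Real.log X + A / (s.re - θ))) ∧
    (s.re = 1 → (bZetaX q X (s.re : ℂ)).re ≤ κ * Real.log X + A / (1 - θ)) ∧
    (1 < s.re →
      (bZetaX q X (s.re : ℂ)).re ≤
        min (s.re * (A + κ) / (s.re - 1)) (κ * Real.log X + s.re * A / (s.re - θ))) := by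
  set σ := s.re
  have hbound : θ < σ → (bZetaX q X σ).re ≤ κ * (∫ x in (1 : ℝ)..X, x ^ (-σ)) + σ * A / (σ - θ) :=
    fun h => (re_bZetaX_ofReal hq X (hfin X) σ).trans_le
      (sum_bNorm_rpow_neg_le hq hfin hA.le hθ0 hAxiomA hX h)
  refine ⟨norm_bZetaX_le hq X (hfin X) s, fun hθσ hσ => ?_, fun hσ => ?_, fun hσ => ?_⟩
  · have hA' : σ * A / (σ - θ) ≤ A / (σ - θ) := by
      gcongr
      exact mul_le_of_le_one_left hA.le hσ.le
    have hJ := integral_one_rpow_le_of_neg_one_lt hX (r := -σ) (by linarith)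
    have hJlog := integral_one_rpow_le_mul_log hX (r := -σ) (by linarith)
    rw [neg_add_eq_sub] at hJ hJlog
    refine le_min ?_ ?_
    · rw [mul_div_assoc]; linarith [hbound hθσ, mul_le_mul_of_nonneg_left hJ hκ.le]
    · rw [mul_assoc]; linarith [hbound hθσ, mul_le_mul_of_nonneg_left hJlog hκ.le]
  · have hb := hbound (by linarith)
    rw [hσ, one_mul] at hb
    rw [hσ]
    linarith [mul_le_mul_of_nonneg_left (integral_one_rpow_le_log hX (r := -1) le_rfl) hκ.le]
  · have hb := hbound (by linarith)
    have hJ := integral_one_rpow_le_of_lt_neg_one hX (r := -σ) (by linarith)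
    have hJlog := integral_one_rpow_le_log hX (r := -σ) (by linarith)
    rw [neg_neg] at hJ
    refine le_min ?_ ?_
    · calc _ ≤ κ * (1 / (σ - 1)) + σ * A / (σ - 1) := by
            have : σ * A / (σ - θ) ≤ σ * A / (σ - 1) := by gcongr
            linarith [mul_le_mul_of_nonneg_left hJ hκ.le]
        _ ≤ σ * κ / (σ - 1) + σ * A / (σ - 1) := by
            rw [mul_one_div]
            gcongr
            exact le_mul_of_one_le_left hκ.le hσ.le
        _ = σ * (A + κ) / (σ - 1) := by ring
    · linarith [mul_le_mul_of_nonneg_left hJlog hκ.le]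
end

section
/- For every complex s = σ + it with θ < σ = Re s ≤ 4, |t| ≤ 9 and s ≠ 1 one has |ζ(s)·(s−1) − κ| ≤ A·|s|·|s−1|/(σ−θ) ≤ 100·A/(σ−θ). As a consequence, ζ(s) ≠ 0 for every s ≠ 1 with Re s > θ and |s − 1| ≤ κ·(1−θ)/(A+κ). -/
open scoped BigOperators Real

/-!
Multiplying the defining formula by `s - 1` gives
`ζ(s)(s - 1) - κ = s (s - 1) ∫_1^∞ R(x) x^(-s-1) dx`, and Axiom A bounds the integral by
`A ∫_1^∞ x^(θ - σ - 1) dx = A / (σ - θ)`. Near `s = 1` the right-hand side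
`A |s| |s - 1| / (σ - θ)` is smaller than `κ`, so `ζ(s)(s - 1)` cannot vanish.
-/

open MeasureTheory

lemma norm_setIntegral_Ioi_one_mul_cpow_le {f : ℝ → ℂ} {A θ : ℝ}
    (hf : ∀ x : ℝ, 1 ≤ x → ‖f x‖ ≤ A * x ^ θ) {s : ℂ} (hs : θ < s.re) :
    ‖∫ x in Set.Ioi (1 : ℝ), f x * (x : ℂ) ^ (-s - 1)‖ ≤ A / (s.re - θ) := by
  have hmajorant : ∀ᵐ x ∂volume.restrict (Set.Ioi (1 : ℝ)),
      ‖f x * (x : ℂ) ^ (-s - 1)‖ ≤ A * x ^ (θ - s.re - 1) := by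
    rw [ae_restrict_iff' measurableSet_Ioi]
    filter_upwards with x (hx : 1 < x)
    have hx0 : 0 < x := one_pos.trans hx
    rw [norm_mul, Complex.norm_cpow_eq_rpow_re_of_pos hx0]
    calc ‖f x‖ * x ^ (-s - 1).re ≤ A * x ^ θ * x ^ (-s - 1).re := by
          gcongr
          exact hf x hx.le
      _ = A * x ^ (θ - s.re - 1) := by
          rw [mul_assoc, ← Real.rpow_add hx0]
          simp only [Complex.sub_re, Complex.neg_re, Complex.one_re]
          ring_nf
  have hexp : θ - s.re - 1 < -1 := by linarith
  calc _ ≤ ∫ x in Set.Ioi (1 : ℝ), A * x ^ (θ - s.re - 1) :=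
        norm_integral_le_of_norm_le ((integrableOn_Ioi_rpow_of_lt hexp one_pos).const_mul A)
          hmajorant
    _ = A / (s.re - θ) := by
        rw [integral_const_mul, integral_Ioi_rpow_of_lt hexp one_pos, Real.one_rpow,
          show θ - s.re - 1 + 1 = -(s.re - θ) by ring, div_neg, neg_div, neg_neg, mul_one_div]

lemma bZeta_mul_sub_one_sub (q : ℕ → ℝ) (κ : ℝ) {s : ℂ} (hs : s ≠ 1) :
    bZeta q κ s * (s - 1) - κ =
      s * (s - 1) * ∫ x in Set.Ioi (1 : ℝ), (bR q κ x : ℂ) * (x : ℂ) ^ (-s - 1) := by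
  have : s - 1 ≠ 0 := sub_ne_zero.mpr hs
  rw [bZeta]
  field_simp
  ring

lemma norm_bZeta_mul_sub_one_sub_le {q : ℕ → ℝ} {κ A θ : ℝ}
    (hR : ∀ x : ℝ, 1 ≤ x → |bR q κ x| ≤ A * x ^ θ) {s : ℂ} (hs : θ < s.re) (hs1 : s ≠ 1) :
    ‖bZeta q κ s * (s - 1) - κ‖ ≤ A * ‖s‖ * ‖s - 1‖ / (s.re - θ) := by
  have hI := norm_setIntegral_Ioi_one_mul_cpow_le (f := fun x => (bR q κ x : ℂ))
    (by simpa only [Complex.norm_real, Real.norm_eq_abs] using hR) hs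
  rw [bZeta_mul_sub_one_sub q κ hs1, norm_mul, norm_mul]
  calc ‖s‖ * ‖s - 1‖ * _ ≤ ‖s‖ * ‖s - 1‖ * (A / (s.re - θ)) := by gcongr
    _ = A * ‖s‖ * ‖s - 1‖ / (s.re - θ) := by ring

lemma norm_mul_norm_sub_one_le_hundred {s : ℂ} (h₀ : -2 ≤ s.re) (h₄ : s.re ≤ 4)
    (h₉ : |s.im| ≤ 9) : ‖s‖ * ‖s - 1‖ ≤ 100 := by
  have him : s.im ^ 2 ≤ 81 := by nlinarith [sq_abs s.im, abs_nonneg s.im]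
  have hs : ‖s‖ ^ 2 ≤ 97 := by
    rw [Complex.sq_norm, Complex.normSq_apply]
    nlinarith
  have hs1 : ‖s - 1‖ ^ 2 ≤ 90 := by
    rw [Complex.sq_norm, Complex.normSq_apply]
    simp only [Complex.sub_re, Complex.one_re, Complex.sub_im, Complex.one_im, sub_zero]
    nlinarith
  refine (pow_le_pow_iff_left₀ (by positivity) (by norm_num) two_ne_zero).mp ?_
  calc (‖s‖ * ‖s - 1‖) ^ 2 = ‖s‖ ^ 2 * ‖s - 1‖ ^ 2 := mul_pow _ _ _
    _ ≤ 97 * 90 := by gcongr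
    _ ≤ 100 ^ 2 := by norm_num

lemma norm_le_re_add_norm_sub_one_sq_div_two (s : ℂ) : ‖s‖ ≤ s.re + ‖s - 1‖ ^ 2 / 2 := by
  have hsq : ‖s - 1‖ ^ 2 = ‖s‖ ^ 2 - 2 * s.re + 1 := by
    simp only [Complex.sq_norm, Complex.normSq_apply, Complex.sub_re, Complex.one_re,
      Complex.sub_im, Complex.one_im, sub_zero]
    ring
  nlinarith [sq_nonneg (‖s‖ - 1)]

lemma mul_norm_mul_norm_sub_one_lt {A κ θ : ℝ} (hA : 0 < A) (hκ : 0 < κ) (hθ : 0 ≤ θ)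
    {s : ℂ} (hs : s ≠ 1) (hball : ‖s - 1‖ ≤ κ * (1 - θ) / (A + κ)) :
    A * ‖s‖ * ‖s - 1‖ < κ * (s.re - θ) := by
  set r := ‖s - 1‖
  have hr : 0 < r := norm_pos_iff.mpr (sub_ne_zero.mpr hs)
  have hball' : (A + κ) * r ≤ κ * (1 - θ) := by
    rwa [le_div_iff₀ (by positivity), mul_comm] at hball
  have hr1 : r < 1 := by nlinarith
  have hAr : A * r < κ := by nlinarith
  have hre : 1 - r ≤ s.re := by
    linarith [Complex.re_le_norm (1 - s), norm_sub_rev 1 s, Complex.sub_re 1 s, Complex.one_re]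
  calc A * ‖s‖ * r ≤ A * (s.re + r ^ 2 / 2) * r := by
        gcongr
        exact norm_le_re_add_norm_sub_one_sq_div_two s
    _ < κ * (s.re - θ) := by
        -- by `1 - r ≤ σ`, `A r < κ` and `hball'`, the difference is at least `A r² (1 - r/2) > 0`
        nlinarith [mul_nonneg (sub_nonneg.mpr hre) (sub_nonneg.mpr hAr.le),
          mul_pos (mul_pos hA (mul_pos hr hr)) (by linarith : (0 : ℝ) < 2 - r)]

theorem statement_9_general
    (q : ℕ → ℝ)
    (κ A θ : ℝ) (hκ : 0 < κ) (hA : 0 < A) (hθ0 : 0 < θ)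
    (hAxiomA : ∀ x : ℝ, 1 ≤ x → |bR q κ x| ≤ A * x ^ θ)
    :
    (∀ s : ℂ, θ < s.re → s.re ≤ 4 → |s.im| ≤ 9 → s ≠ 1 →
      ‖bZeta q κ s * (s - 1) - (κ : ℂ)‖ ≤
          A * ‖s‖ * ‖s - 1‖ / (s.re - θ) ∧
        A * ‖s‖ * ‖s - 1‖ / (s.re - θ) ≤ 100 * A / (s.re - θ)) ∧
    (∀ s : ℂ, s ≠ 1 → θ < s.re → ‖s - 1‖ ≤ κ * (1 - θ) / (A + κ) →
      bZeta q κ s ≠ 0) := by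
  refine ⟨fun s hσ h₄ h₉ hs1 => ⟨norm_bZeta_mul_sub_one_sub_le hAxiomA hσ hs1, ?_⟩,
    fun s hs1 hσ hball hzero => ?_⟩
  · refine div_le_div_of_nonneg_right ?_ (by linarith)
    rw [mul_assoc, mul_comm 100]
    exact mul_le_mul_of_nonneg_left (norm_mul_norm_sub_one_le_hundred (by linarith) h₄ h₉) hA.le
  · have hkey := norm_bZeta_mul_sub_one_sub_le hAxiomA hσ hs1
    rw [hzero, zero_mul, zero_sub, norm_neg, Complex.norm_real, Real.norm_of_nonneg hκ.le,
      le_div_iff₀ (by linarith)] at hkey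
    linarith [mul_norm_mul_norm_sub_one_lt hA hκ hθ0.le hs1 hball]

theorem statement_9
    (q : ℕ → ℝ) (hq : ∀ i, 1 < q i)
    (hfin : ∀ x : ℝ, {g : ℕ →₀ ℕ | bNorm q g ≤ x}.Finite)
    (κ A θ : ℝ) (hκ : 0 < κ) (hA : 0 < A) (hθ0 : 0 < θ) (hθ1 : θ < 1)
    (hAxiomA : ∀ x : ℝ, 1 ≤ x → |bR q κ x| ≤ A * x ^ θ)
    :
    (∀ s : ℂ, θ < s.re → s.re ≤ 4 → |s.im| ≤ 9 → s ≠ 1 →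
      ‖bZeta q κ s * (s - 1) - (κ : ℂ)‖ ≤
          A * ‖s‖ * ‖s - 1‖ / (s.re - θ) ∧
        A * ‖s‖ * ‖s - 1‖ / (s.re - θ) ≤ 100 * A / (s.re - θ)) ∧
    (∀ s : ℂ, s ≠ 1 → θ < s.re → ‖s - 1‖ ≤ κ * (1 - θ) / (A + κ) →
      bZeta q κ s ≠ 0) :=
  statement_9_general q κ A θ hκ hA hθ0 hAxiomA
end

section
/- Let L ≥ 1 and λ ≥ 1 be real numbers and set I = (1/(2π)) · ∫_{−∞}^{∞} exp( (3 + it)²/L + λ·(3 + it) ) / (3 + it) dt (the integral of (1/s)·exp(s²/L + λs) over the vertical line Re s = 3, divided by 2πi). Then |I − 1| ≤ (1/(2·√(π·L))) · e^(−(λ−1)·L). -/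
/-!
Since `1 / s = ∫₀^∞ e^{-sx} dx` for `Re s > 0`, exchanging the two integrals leaves as inner
integral a Gaussian integral along the vertical line, equal to `√(πL) e^{-L(λ-x)²/4}` whatever
its abscissa. Hence `I = P(X > 0)` for `X` normal with mean `λ` and variance `2/L`, so
`|I - 1| = P(X ≤ 0)`, a Gaussian tail bounded through `y² / 4 ≥ y - 1`.
-/

open scoped Real
open MeasureTheory Set Real
open scoped Complex

lemma inv_eq_integral_cexp_neg_mul_Ioi {s : ℂ} (hs : 0 < s.re) :
    s⁻¹ = ∫ x in Ioi (0 : ℝ), cexp (-s * x) := by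
  rw [integral_exp_mul_complex_Ioi (by simpa using hs)]
  simp

lemma vertical_sq_div_add_mul_eq_quadratic {L : ℝ} (hL : L ≠ 0) (σ a t : ℝ) :
    (σ + t * Complex.I) ^ 2 / L + a * (σ + t * Complex.I) =
      -(1 / L : ℂ) * t ^ 2 + Complex.I * (2 * σ / L + a) * t + (σ ^ 2 / L + a * σ) := by
  have hL' : (L : ℂ) ≠ 0 := by exact_mod_cast hL
  field_simp
  ring_nf
  rw [Complex.I_sq]
  ring

lemma re_neg_one_div_ofReal_neg {L : ℝ} (hL : 0 < L) : (-(1 / L : ℂ)).re < 0 := by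
  simpa [← Complex.ofReal_one, ← Complex.ofReal_div] using hL

lemma integrable_cexp_vertical_sq_div_add_mul {L : ℝ} (hL : 0 < L) (σ a : ℝ) :
    Integrable fun t : ℝ ↦ cexp ((σ + t * Complex.I) ^ 2 / L + a * (σ + t * Complex.I)) := by
  simp_rw [vertical_sq_div_add_mul_eq_quadratic hL.ne']
  exact integrable_cexp_quadratic' (re_neg_one_div_ofReal_neg hL) _ _

lemma integral_cexp_vertical_sq_div_add_mul {L : ℝ} (hL : 0 < L) (σ a : ℝ) :
    ∫ t : ℝ, cexp ((σ + t * Complex.I) ^ 2 / L + a * (σ + t * Complex.I)) =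
      (√(π * L) * rexp (-(L / 4) * a ^ 2) : ℝ) := by
  have hL' : (L : ℂ) ≠ 0 := by exact_mod_cast hL.ne'
  simp_rw [vertical_sq_div_add_mul_eq_quadratic hL.ne',
    integral_cexp_quadratic (re_neg_one_div_ofReal_neg hL)]
  have hsqrt : (π / -(-(1 / L : ℂ))) ^ (1 / 2 : ℂ) = (√(π * L) : ℝ) := by
    rw [neg_neg, div_div_eq_mul_div, div_one, ← Complex.ofReal_mul,
      show (1 / 2 : ℂ) = ((1 / 2 : ℝ) : ℂ) by norm_num, ← Complex.ofReal_cpow (by positivity),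
      Real.sqrt_eq_rpow]
  have hexp : (σ ^ 2 / L + a * σ : ℂ) - (Complex.I * (2 * σ / L + a)) ^ 2 / (4 * -(1 / L : ℂ)) =
      ((-(L / 4) * a ^ 2 : ℝ) : ℂ) := by
    push_cast
    field_simp
    ring_nf
    rw [Complex.I_sq]
    ring
  rw [hsqrt, hexp, ← Complex.ofReal_exp, ← Complex.ofReal_mul]

lemma integral_cexp_vertical_sq_div_add_mul_div {σ L : ℝ} (hσ : 0 < σ) (hL : 0 < L) (a : ℝ) :
    ∫ t : ℝ, cexp ((σ + t * Complex.I) ^ 2 / L + a * (σ + t * Complex.I)) / (σ + t * Complex.I) =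
      (√(π * L) * ∫ x in Ioi (0 : ℝ), rexp (-(L / 4) * (a - x) ^ 2) : ℝ) := by
  set g : ℝ → ℂ := fun t ↦ cexp ((σ + t * Complex.I) ^ 2 / L + a * (σ + t * Complex.I))
  set F : ℝ → ℝ → ℂ := fun t x ↦ g t * cexp (-(σ + t * Complex.I) * x)
  have hlaplace (t : ℝ) : g t / (σ + t * Complex.I) = ∫ x in Ioi (0 : ℝ), F t x := by
    rw [div_eq_mul_inv, inv_eq_integral_cexp_neg_mul_Ioi (by simpa using hσ), integral_const_mul]
  have hF : Integrable (Function.uncurry F) (volume.prod (volume.restrict (Ioi 0))) := by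
    refine ((integrable_cexp_vertical_sq_div_add_mul hL σ a).norm.mul_prod
      (exp_neg_integrableOn_Ioi 0 hσ)).mono' (by fun_prop) (.of_forall fun p ↦ ?_)
    dsimp only [Function.uncurry, F]
    rw [norm_mul, Complex.norm_exp (-_ * _)]
    simp [g]
  have hinner (x : ℝ) : ∫ t : ℝ, F t x = (√(π * L) * rexp (-(L / 4) * (a - x) ^ 2) : ℝ) := by
    rw [← integral_cexp_vertical_sq_div_add_mul hL σ (a - x)]
    congr 1 with t
    simp only [F, g, ← Complex.exp_add]
    push_cast
    ring_nf
  change ∫ t, g t / (σ + t * Complex.I) = _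
  simp_rw [hlaplace]
  rw [integral_integral_swap hF]
  simp_rw [hinner]
  rw [integral_complex_ofReal, integral_const_mul]

lemma integral_Ioi_gaussian_sub_add_integral_Ioi_gaussian_add {b : ℝ} (hb : 0 < b) (c : ℝ) :
    (∫ x in Ioi (0 : ℝ), rexp (-b * (c - x) ^ 2)) + ∫ x in Ioi (0 : ℝ), rexp (-b * (c + x) ^ 2) =
      √(π / b) := by
  have hreflect : ∫ x in Ioi (0 : ℝ), rexp (-b * (c + x) ^ 2) =
      ∫ x in Iic (0 : ℝ), rexp (-b * (c - x) ^ 2) := by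
    simpa only [sub_neg_eq_add, neg_zero] using integral_comp_neg_Ioi 0 fun x ↦ rexp (-b * (c - x) ^ 2)
  have hint : Integrable fun x ↦ rexp (-b * (c - x) ^ 2) :=
    (integrable_exp_neg_mul_sq hb).comp_sub_left c
  rw [hreflect, ← compl_Ioi, integral_add_compl measurableSet_Ioi hint]
  exact (integral_sub_left_eq_self (fun x ↦ rexp (-b * x ^ 2)) volume c).trans (integral_gaussian b)

lemma integral_Ioi_gaussian_add_le {L : ℝ} (hL : 0 < L) (c : ℝ) :
    ∫ x in Ioi (0 : ℝ), rexp (-(L / 4) * (c + x) ^ 2) ≤ rexp (-(c - 1) * L) / L := by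
  calc ∫ x in Ioi (0 : ℝ), rexp (-(L / 4) * (c + x) ^ 2)
      ≤ ∫ x in Ioi (0 : ℝ), rexp (-L * x) * rexp (-(c - 1) * L) := by
        refine setIntegral_mono_on
          ((integrable_exp_neg_mul_sq (by positivity)).comp_add_left c).integrableOn
          ((exp_neg_integrableOn_Ioi 0 hL).mul_const _) measurableSet_Ioi fun x _ ↦ ?_
        rw [← exp_add, exp_le_exp]
        nlinarith [mul_nonneg hL.le (sq_nonneg (c + x - 2))]
    _ = rexp (-(c - 1) * L) / L := by
        rw [integral_mul_const, integral_exp_mul_Ioi (neg_lt_zero.mpr hL)]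
        field_simp
        simp

lemma abs_mul_integral_Ioi_gaussian_sub_one_le {L : ℝ} (hL : 0 < L) (c : ℝ) :
    |√(π * L) / (2 * π) * (∫ x in Ioi (0 : ℝ), rexp (-(L / 4) * (c - x) ^ 2)) - 1| ≤
      1 / (2 * √(π * L)) * rexp (-(c - 1) * L) := by
  set T := ∫ x in Ioi (0 : ℝ), rexp (-(L / 4) * (c + x) ^ 2)
  have hJ : ∫ x in Ioi (0 : ℝ), rexp (-(L / 4) * (c - x) ^ 2) = √(π / (L / 4)) - T :=
    eq_sub_of_add_eq (integral_Ioi_gaussian_sub_add_integral_Ioi_gaussian_add (by positivity) c)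
  have hmass : √(π * L) * √(π / (L / 4)) = 2 * π := by
    rw [← Real.sqrt_mul (by positivity), show π * L * (π / (L / 4)) = (2 * π) ^ 2 by field_simp; ring,
      Real.sqrt_sq (by positivity)]
  have herr : √(π * L) / (2 * π) * (√(π / (L / 4)) - T) - 1 = -(√(π * L) / (2 * π) * T) := by
    rw [mul_sub, div_mul_eq_mul_div, hmass, div_self (by positivity)]
    ring
  have hsq : √(π * L) * √(π * L) = π * L := Real.mul_self_sqrt (by positivity)
  rw [hJ, herr, abs_neg, abs_of_nonneg (by positivity)]
  calc √(π * L) / (2 * π) * T ≤ √(π * L) / (2 * π) * (rexp (-(c - 1) * L) / L) := by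
        gcongr
        exact integral_Ioi_gaussian_add_le hL c
    _ = 1 / (2 * √(π * L)) * rexp (-(c - 1) * L) := by
        field_simp
        linear_combination hsq

theorem statement_19_general (L lam : ℝ) (hL : 1 ≤ L) :
    ‖((1 / (2 * Real.pi) : ℂ) *
        (∫ t : ℝ, Complex.exp ((3 + t * Complex.I) ^ 2 / (L : ℂ) +
          (lam : ℂ) * (3 + t * Complex.I)) / (3 + t * Complex.I)) - 1)‖ ≤
      1 / (2 * Real.sqrt (Real.pi * L)) * Real.exp (-(lam - 1) * L) := by
  have hL0 : 0 < L := by linarith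
  have hline := integral_cexp_vertical_sq_div_add_mul_div three_pos hL0 lam
  simp only [Complex.ofReal_ofNat] at hline
  set J := ∫ x in Ioi (0 : ℝ), rexp (-(L / 4) * (lam - x) ^ 2)
  have hreal : (1 / (2 * π) : ℂ) * ((√(π * L) * J : ℝ) : ℂ) - 1 =
      ((√(π * L) / (2 * π) * J - 1 : ℝ) : ℂ) := by
    push_cast
    ring
  rw [hline, hreal, Complex.norm_real, Real.norm_eq_abs]
  exact abs_mul_integral_Ioi_gaussian_sub_one_le hL0 lam

theorem statement_19 (L lam : ℝ) (hL : 1 ≤ L) (hlam : 1 ≤ lam) :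
    ‖((1 / (2 * Real.pi) : ℂ) *
        (∫ t : ℝ, Complex.exp ((3 + t * Complex.I) ^ 2 / (L : ℂ) +
          (lam : ℂ) * (3 + t * Complex.I)) / (3 + t * Complex.I)) - 1)‖ ≤
      1 / (2 * Real.sqrt (Real.pi * L)) * Real.exp (-(lam - 1) * L) :=
  statement_19_general L lam hL
end
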